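/- arXiv:2410.01590 — 12 statements merged into one kernel-verified Lean document; each statement's English description precedes it below -/
import Mathlib

section
/- If a monoid M is right-noetherian, then every element of M that has a right inverse (x * y = 1 for some y) is a unit, and every element of M that has a left inverse (y * x = 1 for some y) is a unit. -/
/-- A monoid `M` is right-noetherian if for all sequences `u v : ℕ → M` with
`v n = v (n+1) * u n` for every `n`, some `u n` is a unit. -/
def RightNoetherian (M : Type) [Monoid M] : Prop :=
  ∀ u v : ℕ → M, (∀ n, v n = v (n + 1) * u n) → ∃ n, IsUnit (u n)

theorem invertibles_of_rightNoetherian (M : Type) [Monoid M]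
    (h : RightNoetherian M) :
    (∀ x : M, (∃ y : M, x * y = 1) → IsUnit x) ∧
    (∀ x : M, (∃ y : M, y * x = 1) → IsUnit x) := by
  have key : ∀ x : M, (∃ y : M, x * y = 1) → IsUnit x := by
    intro x ⟨y, hxy⟩
    obtain ⟨n, hu⟩ := h (fun _ => y) (fun n => x ^ n)
      (fun n => by show x ^ n = x ^ (n+1) * y; rw [pow_succ, mul_assoc, hxy, mul_one])
    obtain ⟨u, hy⟩ := hu
    have : x = ↑u⁻¹ := by
      have := congrArg (· * (↑u⁻¹ : M)) hxy
      simpa [← hy, mul_assoc] using this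
    rw [this]; exact u⁻¹.isUnit
  refine ⟨key, fun x ⟨y, hyx⟩ => ?_⟩
  have hy : IsUnit y := key y ⟨x, hyx⟩
  obtain ⟨u, rfl⟩ := hy
  have : x = ↑u⁻¹ := by
    have := congrArg ((↑u⁻¹ : M) * ·) hyx
    simpa [← mul_assoc] using this
  rw [this]; exact u⁻¹.isUnit
end

section
/- The pair (E₁, M₁) = (Surj ∩ Inj ∩ Inv, Tot) is a factorization system on Kl(T_M): (i) every Kleisli morphism f : X → Option (M × Z) factors as m ∘ e (Kleisli composition) with e in Surj ∩ Inj ∩ Inv and m in Tot; and (ii) for every commuting square v ∘ e = m ∘ u with e : X → Option (M × Y₁) in Surj ∩ Inj ∩ Inv, m : Y₂ → Option (M × Z) in Tot, u : X → Option (M × Y₂) and v : Y₁ → Option (M × Z), there is a unique d : Y₁ → Option (M × Y₂) with d ∘ e = u and m ∘ d = v. -/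
/-- Kleisli composition for the monad `T_M X = Option (M × X)`. -/
def KlComp {M : Type} [Monoid M] {X Y Z : Type}
    (g : Y → Option (M × Z)) (f : X → Option (M × Y)) : X → Option (M × Z) :=
  fun x => (f x).bind fun p => (g p.2).map fun q => (p.1 * q.1, q.2)

/-- The Kleisli identity on `X`. -/
def KlId (M : Type) [Monoid M] (X : Type) : X → Option (M × X) :=
  fun x => some (1, x)

/-- A Kleisli morphism is an isomorphism when it has a two-sided inverse. -/
def IsKlIso {M : Type} [Monoid M] {X Y : Type} (f : X → Option (M × Y)) : Prop :=
  ∃ g : Y → Option (M × X), KlComp g f = KlId M X ∧ KlComp f g = KlId M Y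

/-- The class `Surj` of Kleisli morphisms. -/
def KlSurj {M X Y : Type} (f : X → Option (M × Y)) : Prop :=
  ∀ y : Y, ∃ (x : X) (υ : M), f x = some (υ, y)

/-- The class `Inj` of Kleisli morphisms. -/
def KlInj {M X Y : Type} (f : X → Option (M × Y)) : Prop :=
  ∀ (x x' : X) (υ υ' : M) (y : Y), f x = some (υ, y) → f x' = some (υ', y) → x = x'

/-- The class `Tot` of Kleisli morphisms. -/
def KlTot {M X Y : Type} (f : X → Option (M × Y)) : Prop :=
  ∀ x : X, f x ≠ none

/-- The class `Inv` of Kleisli morphisms. -/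
def KlInv {M : Type} [Monoid M] {X Y : Type} (f : X → Option (M × Y)) : Prop :=
  ∀ (x : X) (υ : M) (y : Y), f x = some (υ, y) → IsUnit υ

/-!
Every Kleisli morphism `f` factors through its domain of definition `{x // f x ≠ none}`: first
the partial inclusion with weight `1`, then `f` restricted to the domain, which is total.

For orthogonality, a morphism `e` in `Surj ∩ Inv` is an epimorphism, because precomposing with
`e` reads off `d y` up to left multiplication by a unit. If moreover `e` is in `Inj`, every `y`
has exactly one preimage `x`, so a diagonal `d` with `d ∘ e = u` can be defined by
`d y = υ⁻¹ · u x`; this is consistent on `x ∉ dom e` because `m` is total and `m ∘ u = v ∘ e`.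
Then `m ∘ d = v` follows by cancelling the epimorphism `e` from `m ∘ d ∘ e = m ∘ u = v ∘ e`.
-/

namespace KlComp

variable {M : Type} [Monoid M] {X Y Z W : Type}

theorem apply_of_eq_none {g : Y → Option (M × Z)} {f : X → Option (M × Y)} {x : X}
    (h : f x = none) : KlComp g f x = none := by
  simp [KlComp, h]

theorem apply_of_eq_some {g : Y → Option (M × Z)} {f : X → Option (M × Y)} {x : X} {υ : M}
    {y : Y} (h : f x = some (υ, y)) :
    KlComp g f x = (g y).map (Prod.map (υ * ·) id) := by
  simp only [KlComp, h, Option.bind_some]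
  rfl

theorem assoc (h : Z → Option (M × W)) (g : Y → Option (M × Z)) (f : X → Option (M × Y)) :
    KlComp (KlComp h g) f = KlComp h (KlComp g f) := by
  funext x
  simp [KlComp, Option.bind_map, Option.map_bind, Option.bind_assoc, Function.comp_def,
    mul_assoc]

theorem eq_none_of_klTot {m : Y → Option (M × Z)} {u : X → Option (M × Y)} {x : X}
    (hm : KlTot m) (h : KlComp m u x = none) : u x = none := by
  cases hu : u x with
  | none => rfl
  | some p =>
    rw [apply_of_eq_some hu, Option.map_eq_none_iff] at h
    exact absurd h (hm p.2)

theorem cancel_right_of_klSurj_of_klInv {d d' : Y → Option (M × Z)} {e : X → Option (M × Y)}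
    (hS : KlSurj e) (hV : KlInv e) (h : KlComp d e = KlComp d' e) : d = d' := by
  funext y
  obtain ⟨x, υ, hx⟩ := hS y
  have hυ : Function.Injective (Prod.map (υ * ·) (id : Z → Z)) :=
    (hV x υ y hx).mul_right_injective.prodMap Function.injective_id
  have hdx := congrFun h x
  rw [apply_of_eq_some hx, apply_of_eq_some hx] at hdx
  exact Option.map_injective hυ hdx

end KlComp

section DomainFactorization

variable {M : Type} [Monoid M] {X Z : Type}

def klToDomain (f : X → Option (M × Z)) : X → Option (M × {x // f x ≠ none}) :=
  fun x => if h : f x = none then none else some (1, ⟨x, h⟩)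

theorem klToDomain_apply_of_ne_none {f : X → Option (M × Z)} {x : X} (h : f x ≠ none) :
    klToDomain f x = some (1, ⟨x, h⟩) :=
  dif_neg h

theorem klComp_klToDomain (f : X → Option (M × Z)) :
    KlComp (fun x : {x // f x ≠ none} => f x.1) (klToDomain f) = f := by
  funext x
  by_cases h : f x = none
  · rw [KlComp.apply_of_eq_none (dif_pos h), h]
  · rw [KlComp.apply_of_eq_some (klToDomain_apply_of_ne_none h)]
    simp only [one_mul]
    exact Option.map_id'

theorem klSurj_klToDomain (f : X → Option (M × Z)) : KlSurj (klToDomain f) :=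
  fun x => ⟨x.1, 1, klToDomain_apply_of_ne_none x.2⟩

theorem klToDomain_eq_some {f : X → Option (M × Z)} {x : X} {υ : M} {y : {x // f x ≠ none}}
    (h : klToDomain f x = some (υ, y)) : υ = 1 ∧ y.1 = x := by
  unfold klToDomain at h
  split_ifs at h
  simp only [Option.some_inj, Prod.mk.injEq] at h
  exact ⟨h.1.symm, by rw [← h.2]⟩

theorem klInj_klToDomain (f : X → Option (M × Z)) : KlInj (klToDomain f) :=
  fun _ _ _ _ _ hx hx' => (klToDomain_eq_some hx).2.symm.trans (klToDomain_eq_some hx').2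

theorem klInv_klToDomain (f : X → Option (M × Z)) : KlInv (klToDomain f) := by
  intro x υ y h
  rw [(klToDomain_eq_some h).1]
  exact isUnit_one

end DomainFactorization

theorem exists_klComp_eq {M : Type} [Monoid M] {X Y₁ Y₂ : Type} {e : X → Option (M × Y₁)}
    {u : X → Option (M × Y₂)} (hS : KlSurj e) (hI : KlInj e) (hV : KlInv e)
    (hu : ∀ x, e x = none → u x = none) : ∃ d, KlComp d e = u := by
  choose s υ hs using hS
  choose w hw using fun y => hV _ _ _ (hs y)
  refine ⟨fun y => (u (s y)).map (Prod.map (↑(w y)⁻¹ * ·) id), ?_⟩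
  funext x
  cases he : e x with
  | none => rw [KlComp.apply_of_eq_none he, hu x he]
  | some p =>
    obtain ⟨υ', y⟩ := p
    obtain rfl : x = s y := hI _ _ _ _ _ he (hs y)
    have hυ' : υ' = w y := by
      rw [hw]
      simpa using he.symm.trans (hs y)
    subst hυ'
    rw [KlComp.apply_of_eq_some he, Option.map_map]
    simp [Function.comp_def, Prod.map]

theorem factorization_system_E1_M1 (M : Type) [Monoid M] :
    (∀ (X Z : Type) (f : X → Option (M × Z)),
      ∃ (Y : Type) (e : X → Option (M × Y)) (m : Y → Option (M × Z)),
        KlComp m e = f ∧ (KlSurj e ∧ KlInj e ∧ KlInv e) ∧ KlTot m) ∧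
    (∀ (X Y₁ Y₂ Z : Type) (e : X → Option (M × Y₁)) (m : Y₂ → Option (M × Z))
        (u : X → Option (M × Y₂)) (v : Y₁ → Option (M × Z)),
      KlSurj e → KlInj e → KlInv e → KlTot m →
      KlComp v e = KlComp m u →
      ∃! d : Y₁ → Option (M × Y₂), KlComp d e = u ∧ KlComp m d = v) := by
  refine ⟨fun X Z f => ⟨_, klToDomain f, fun x => f x.1, klComp_klToDomain f,
    ⟨klSurj_klToDomain f, klInj_klToDomain f, klInv_klToDomain f⟩, fun x => x.2⟩, ?_⟩
  intro X Y₁ Y₂ Z e m u v hS hI hV hT hsq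
  have hu : ∀ x, e x = none → u x = none := fun x he =>
    KlComp.eq_none_of_klTot hT (congrFun hsq x ▸ KlComp.apply_of_eq_none he)
  obtain ⟨d, hd⟩ := exists_klComp_eq hS hI hV hu
  refine ⟨d, ⟨hd, KlComp.cancel_right_of_klSurj_of_klInv hS hV ?_⟩, fun d' hd' =>
    KlComp.cancel_right_of_klSurj_of_klInv hS hV (hd'.1.trans hd.symm)⟩
  rw [KlComp.assoc, hd, hsq]
end

section
/- The pair (E₂, M₂) = (Surj ∩ Inj, Inv ∩ Tot) is a factorization system on Kl(T_M): (i) every Kleisli morphism f : X → Option (M × Z) factors as m ∘ e (Kleisli composition) with e in Surj ∩ Inj and m in Inv ∩ Tot; and (ii) for every commuting square v ∘ e = m ∘ u with e : X → Option (M × Y₁) in Surj ∩ Inj, m : Y₂ → Option (M × Z) in Inv ∩ Tot, u : X → Option (M × Y₂) and v : Y₁ → Option (M × Z), there is a unique d : Y₁ → Option (M × Y₂) with d ∘ e = u and m ∘ d = v. -/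
/-! A Kleisli morphism in `Inv ∩ Tot` is a plain function carrying unit weights, and one in
`Surj ∩ Inj` is a partial bijection. So `f` factors as its restriction to its domain of definition,
which keeps the weights, followed by the underlying function with weight `1`. In a square
`v ∘ e = m ∘ u`, a filler must send `y₁` to the point of `u (φ y₁)`, where `φ` inverts `e`, with the
weight of `v y₁` divided by the unit weight of `m` there; precomposing with the surjective `e`
pins down the points, and postcomposing with `m` then pins down the weights, since units cancel. -/

section KlComp

variable {M : Type} [Monoid M] {X Y Z : Type} {g : Y → Option (M × Z)} {f : X → Option (M × Y)}
  {x : X}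

theorem klComp_apply_of_eq_none (h : f x = none) : KlComp g f x = none := by
  simp [KlComp, h]

theorem klComp_apply_of_eq_some {υ : M} {y : Y} (h : f x = some (υ, y)) :
    KlComp g f x = (g y).map fun q => (υ * q.1, q.2) := by
  simp [KlComp, h]

end KlComp

section UnitsMap

variable {M : Type} [Monoid M] {X Y Z : Type}

def klUnitsMap (w : Y → Mˣ) (g : Y → Z) : Y → Option (M × Z) :=
  fun y => some ((w y : M), g y)

variable {w : Y → Mˣ} {g : Y → Z}

theorem klInv_klUnitsMap : KlInv (klUnitsMap w g) := by
  rintro y υ z h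
  obtain ⟨rfl, -⟩ := Prod.mk.inj (Option.some.inj h)
  exact (w y).isUnit

theorem klTot_klUnitsMap : KlTot (klUnitsMap (M := M) w g) :=
  fun _ => Option.some_ne_none _

theorem exists_eq_klUnitsMap {m : Y → Option (M × Z)} (hinv : KlInv m) (htot : KlTot m) :
    ∃ (w : Y → Mˣ) (g : Y → Z), m = klUnitsMap w g := by
  have hm : ∀ y, ∃ (u : Mˣ) (z : Z), m y = some ((u : M), z) := by
    intro y
    obtain ⟨⟨υ, z⟩, h⟩ := Option.ne_none_iff_exists'.mp (htot y)
    obtain ⟨u, rfl⟩ := hinv y υ z h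
    exact ⟨u, z, h⟩
  choose w g h using hm
  exact ⟨w, g, funext h⟩

theorem klComp_klUnitsMap_apply (d : X → Option (M × Y)) (x : X) :
    KlComp (klUnitsMap w g) d x = (d x).map fun p => (p.1 * (w p.2 : M), g p.2) := by
  simp only [KlComp, klUnitsMap]
  cases d x <;> rfl

theorem eq_of_klComp_klUnitsMap_eq {d₁ d₂ : X → Option (M × Y)}
    (h : KlComp (klUnitsMap w g) d₁ = KlComp (klUnitsMap w g) d₂)
    (hsnd : ∀ x, (d₁ x).map Prod.snd = (d₂ x).map Prod.snd) : d₁ = d₂ := by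
  funext x
  have hx := congrFun h x
  rw [klComp_klUnitsMap_apply, klComp_klUnitsMap_apply] at hx
  specialize hsnd x
  generalize d₁ x = o₁, d₂ x = o₂ at hx hsnd
  rcases o₁ with _ | ⟨ν₁, y₁⟩ <;> rcases o₂ with _ | ⟨ν₂, y₂⟩ <;>
    simp only [Option.map_none, Option.map_some, reduceCtorEq, Option.some.injEq, Prod.mk.injEq]
      at hsnd hx ⊢
  subst hsnd
  exact ⟨(Units.mul_left_inj _).mp hx.1, rfl⟩

end UnitsMap

section DomainRestrict

variable {M X Z : Type}

def klDomainRestrict (f : X → Option (M × Z)) : X → Option (M × {x // (f x).isSome}) :=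
  fun x => if h : (f x).isSome then some (((f x).get h).1, ⟨x, h⟩) else none

variable (f : X → Option (M × Z))

theorem klSurj_klDomainRestrict : KlSurj (klDomainRestrict f) :=
  fun ⟨x, h⟩ => ⟨x, ((f x).get h).1, by simp [klDomainRestrict, h]⟩

theorem klInj_klDomainRestrict : KlInj (klDomainRestrict f) := by
  have hval : ∀ x υ y, klDomainRestrict f x = some (υ, y) → x = y.1 := by
    intro x υ y h
    by_cases hx : (f x).isSome
    · simp only [klDomainRestrict, hx, dite_true, Option.some.injEq, Prod.mk.injEq] at h
      rw [← h.2]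
    · simp [klDomainRestrict, hx] at h
  exact fun x x' υ υ' y h h' => (hval x υ y h).trans (hval x' υ' y h').symm

theorem klComp_klDomainRestrict [Monoid M] :
    KlComp (klUnitsMap 1 fun y => ((f y.1).get y.2).2) (klDomainRestrict f) = f := by
  funext x
  rcases h : f x with _ | ⟨υ, z⟩
  · simp [KlComp, klDomainRestrict, h]
  · simp [KlComp, klDomainRestrict, klUnitsMap, h]

end DomainRestrict

section Diagonal

variable {M : Type} [Monoid M] {X Y₁ Y₂ Z : Type}

theorem map_snd_eq_of_klComp_eq {e : X → Option (M × Y₁)} (he : KlSurj e)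
    {d₁ d₂ : Y₁ → Option (M × Y₂)} (h : KlComp d₁ e = KlComp d₂ e) (y : Y₁) :
    (d₁ y).map Prod.snd = (d₂ y).map Prod.snd := by
  obtain ⟨x, υ, hx⟩ := he y
  have hsnd := congrArg (Option.map Prod.snd) (congrFun h x)
  simpa [klComp_apply_of_eq_some hx, Option.map_map, Function.comp_def] using hsnd

theorem exists_klComp_klUnitsMap_diagonal {e : X → Option (M × Y₁)} {w : Y₂ → Mˣ} {g : Y₂ → Z}
    {u : X → Option (M × Y₂)} {v : Y₁ → Option (M × Z)} (hs : KlSurj e) (hi : KlInj e)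
    (hsq : KlComp v e = KlComp (klUnitsMap w g) u) :
    ∃ d : Y₁ → Option (M × Y₂), KlComp d e = u ∧ KlComp (klUnitsMap w g) d = v := by
  choose φ c hφ using hs
  have hnone : ∀ x, e x = none → u x = none := by
    intro x hx
    have hsq_x := congrFun hsq x
    rwa [klComp_apply_of_eq_none hx, klComp_klUnitsMap_apply, eq_comm,
      Option.map_eq_none_iff] at hsq_x
  have hsq_φ : ∀ y₁, (v y₁).map (fun q => (c y₁ * q.1, q.2)) =
      (u (φ y₁)).map fun p => (p.1 * (w p.2 : M), g p.2) := by
    intro y₁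
    rw [← klComp_apply_of_eq_some (hφ y₁), hsq, klComp_klUnitsMap_apply]
  have hv_none : ∀ y₁, u (φ y₁) = none → v y₁ = none := by
    intro y₁ hu
    simpa [hu] using hsq_φ y₁
  have hv_some : ∀ y₁ ν y₂, u (φ y₁) = some (ν, y₂) →
      ∃ μ, v y₁ = some (μ, g y₂) ∧ c y₁ * μ = ν * w y₂ := by
    intro y₁ ν y₂ hu
    have hy₁ := hsq_φ y₁
    rw [hu] at hy₁
    rcases hv : v y₁ with _ | ⟨μ, z⟩ <;> simp only [hv, Option.map_none, Option.map_some,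
      reduceCtorEq, Option.some.injEq, Prod.mk.injEq] at hy₁
    exact ⟨μ, by rw [hy₁.2], hy₁.1⟩
  refine ⟨fun y₁ => (u (φ y₁)).bind fun p => (v y₁).map fun q => (q.1 * ↑(w p.2)⁻¹, p.2), ?_, ?_⟩
  · funext x
    rcases he : e x with _ | ⟨c', y₁⟩
    · rw [klComp_apply_of_eq_none he, hnone x he]
    · obtain rfl : x = φ y₁ := hi _ _ _ _ _ he (hφ y₁)
      obtain rfl : c y₁ = c' := by simpa [hφ y₁] using he
      rw [klComp_apply_of_eq_some he]
      rcases hu : u (φ y₁) with _ | ⟨ν, y₂⟩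
      · simp
      · obtain ⟨μ, hv, hμ⟩ := hv_some y₁ ν y₂ hu
        simp [hv, ← mul_assoc, hμ]
  · funext y₁
    rw [klComp_klUnitsMap_apply]
    rcases hu : u (φ y₁) with _ | ⟨ν, y₂⟩
    · simp [hv_none y₁ hu]
    · obtain ⟨μ, hv, -⟩ := hv_some y₁ ν y₂ hu
      simp [hv]

end Diagonal

theorem factorization_system_E2_M2 (M : Type) [Monoid M] :
    (∀ (X Z : Type) (f : X → Option (M × Z)),
      ∃ (Y : Type) (e : X → Option (M × Y)) (m : Y → Option (M × Z)),
        KlComp m e = f ∧ (KlSurj e ∧ KlInj e) ∧ (KlInv m ∧ KlTot m)) ∧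
    (∀ (X Y₁ Y₂ Z : Type) (e : X → Option (M × Y₁)) (m : Y₂ → Option (M × Z))
        (u : X → Option (M × Y₂)) (v : Y₁ → Option (M × Z)),
      KlSurj e → KlInj e → KlInv m → KlTot m →
      KlComp v e = KlComp m u →
      ∃! d : Y₁ → Option (M × Y₂), KlComp d e = u ∧ KlComp m d = v) := by
  refine ⟨fun X Z f => ⟨_, klDomainRestrict f, _, klComp_klDomainRestrict f,
    ⟨klSurj_klDomainRestrict f, klInj_klDomainRestrict f⟩, klInv_klUnitsMap, klTot_klUnitsMap⟩, ?_⟩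
  intro X Y₁ Y₂ Z e m u v hs hi hinv htot hsq
  obtain ⟨w, g, rfl⟩ := exists_eq_klUnitsMap hinv htot
  obtain ⟨d, hde, hmd⟩ := exists_klComp_klUnitsMap_diagonal hs hi hsq
  refine ⟨d, ⟨hde, hmd⟩, fun d' ⟨hde', hmd'⟩ => ?_⟩
  exact eq_of_klComp_klUnitsMap_eq (hmd'.trans hmd.symm)
    (map_snd_eq_of_klComp_eq hs (hde'.trans hde.symm))
end

section
/- The pair (E₃, M₃) = (Surj, Inj ∩ Inv ∩ Tot) is a factorization system on Kl(T_M): (i) every Kleisli morphism f : X → Option (M × Z) factors as m ∘ e (Kleisli composition) with e in Surj and m in Inj ∩ Inv ∩ Tot; and (ii) for every commuting square v ∘ e = m ∘ u with e : X → Option (M × Y₁) in Surj, m : Y₂ → Option (M × Z) in Inj ∩ Inv ∩ Tot, u : X → Option (M × Y₂) and v : Y₁ → Option (M × Z), there is a unique d : Y₁ → Option (M × Y₂) with d ∘ e = u and m ∘ d = v. -/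
/-! The `Surj` part of the factorization corestricts `f` to the set of values it attains, the other
part is the inclusion of that set with weight `1`.

For the diagonal: a morphism `m` in `Inj ∩ Inv ∩ Tot` is a Kleisli monomorphism (injectivity
recovers the point, and the weight, being a unit, cancels). Every `v` whose values lie in the
image of `m` lifts through `m` by dividing off that unit weight, and in a commuting square
`v ∘ e = m ∘ u` with `e` surjective they do. The lift `d` satisfies `d ∘ e = u` because
`m ∘ (d ∘ e) = v ∘ e = m ∘ u`, and it is unique because `m` is mono. -/

open Function

def klImage {M X Z : Type} (f : X → Option (M × Z)) : Set Z := {z | ∃ x υ, f x = some (υ, z)}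

def klCorestrict {M X Z : Type} (f : X → Option (M × Z)) : X → Option (M × klImage f) :=
  fun x => (f x).pmap (fun p hp => (p.1, ⟨p.2, x, p.1, hp⟩)) fun _ h => h

theorem klSurj_klCorestrict {M X Z : Type} (f : X → Option (M × Z)) :
    KlSurj (klCorestrict f) := by
  rintro ⟨z, x, υ, hx⟩
  exact ⟨x, υ, by simp [klCorestrict, hx]⟩

section
variable {M : Type} [Monoid M]

theorem klComp_eq_some_iff {X Y Z : Type} {g : Y → Option (M × Z)} {f : X → Option (M × Y)}
    {x : X} {c : M} {z : Z} :
    KlComp g f x = some (c, z) ↔ ∃ a y b, f x = some (a, y) ∧ g y = some (b, z) ∧ a * b = c := by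
  simp only [KlComp, Option.bind_eq_some_iff, Option.map_eq_some_iff, Prod.exists, Prod.mk.injEq]
  aesop

theorem klComp_eq_none_iff {X Y Z : Type} {g : Y → Option (M × Z)} (hg : KlTot g)
    {f : X → Option (M × Y)} {x : X} : KlComp g f x = none ↔ f x = none := by
  rcases hf : f x with _ | ⟨a, y⟩
  · simp [KlComp, hf]
  · obtain ⟨⟨b, z⟩, hgy⟩ := Option.ne_none_iff_exists'.mp (hg y)
    simp [KlComp, hf, hgy]

theorem klComp_assoc {W X Y Z : Type} (h : Y → Option (M × Z)) (g : X → Option (M × Y))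
    (f : W → Option (M × X)) : KlComp h (KlComp g f) = KlComp (KlComp h g) f := by
  funext w
  simp only [KlComp, Option.bind_assoc, Option.bind_map, Option.map_bind]
  congr 1
  funext p
  rcases g p.2 with _ | ⟨b, y⟩
  · rfl
  · simp [mul_assoc, comp_def]

theorem klComp_klCorestrict {X Z : Type} (f : X → Option (M × Z)) :
    KlComp (KlId M Z ∘ Subtype.val) (klCorestrict f) = f := by
  funext x
  rcases hf : f x with _ | ⟨a, z⟩ <;> simp [KlComp, KlId, klCorestrict, hf]

theorem klInj_klId_comp {Y Z : Type} {j : Y → Z} (hj : Injective j) : KlInj (KlId M Z ∘ j) := by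
  intro y y' _ _ z hy hy'
  simp only [comp_apply, KlId, Option.some.injEq, Prod.mk.injEq] at hy hy'
  exact hj (hy.2.trans hy'.2.symm)

theorem klInv_klId_comp {Y Z : Type} (j : Y → Z) : KlInv (KlId M Z ∘ j) := by
  intro y υ z hy
  simp only [comp_apply, KlId, Option.some.injEq, Prod.mk.injEq] at hy
  exact hy.1 ▸ isUnit_one

theorem klTot_klId_comp {Y Z : Type} (j : Y → Z) : KlTot (KlId M Z ∘ j) :=
  fun _ => Option.some_ne_none _

theorem klComp_left_cancel {X Y Z : Type} {m : Y → Option (M × Z)}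
    (hinj : KlInj m) (hinv : KlInv m) (htot : KlTot m) {d d' : X → Option (M × Y)}
    (h : KlComp m d = KlComp m d') : d = d' := by
  funext x
  have hx := congrFun h x
  rcases hd : d x with _ | ⟨a, y⟩
  · exact ((klComp_eq_none_iff htot).mp (hx ▸ (klComp_eq_none_iff htot).mpr hd)).symm
  · obtain ⟨⟨b, z⟩, hm⟩ := Option.ne_none_iff_exists'.mp (htot y)
    obtain ⟨a', y', b', hd', hm', hab⟩ :=
      klComp_eq_some_iff.mp (hx ▸ klComp_eq_some_iff.mpr ⟨a, y, b, hd, hm, rfl⟩)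
    obtain rfl : y = y' := hinj y y' b b' z hm hm'
    obtain rfl : b = b' := congrArg Prod.fst (Option.some.inj (hm.symm.trans hm'))
    rw [hd', (hinv y b z hm).mul_left_injective hab]

theorem KlSurj.exists_eq_some_of_klComp_eq {X Y₁ Y₂ Z : Type} {e : X → Option (M × Y₁)}
    (he : KlSurj e) {u : X → Option (M × Y₂)} {v : Y₁ → Option (M × Z)}
    {m : Y₂ → Option (M × Z)} (h : KlComp v e = KlComp m u) {y₁ : Y₁} {σ : M} {z : Z}
    (hv : v y₁ = some (σ, z)) : ∃ y₂ μ, m y₂ = some (μ, z) := by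
  obtain ⟨x, υ, hx⟩ := he y₁
  obtain ⟨-, y₂, μ, -, hm, -⟩ :=
    klComp_eq_some_iff.mp (h ▸ klComp_eq_some_iff.mpr ⟨υ, y₁, σ, hx, hv, rfl⟩)
  exact ⟨y₂, μ, hm⟩

theorem exists_klComp_eq_of_forall {X Y Z : Type} {m : Y → Option (M × Z)} (hinv : KlInv m)
    {v : X → Option (M × Z)} (hv : ∀ x σ z, v x = some (σ, z) → ∃ y μ, m y = some (μ, z)) :
    ∃ d, KlComp m d = v := by
  have pointwise : ∀ x, ∃ o : Option (M × Y),
      (o.bind fun p => (m p.2).map fun q => (p.1 * q.1, q.2)) = v x := by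
    intro x
    rcases hvx : v x with _ | ⟨σ, z⟩
    · exact ⟨none, rfl⟩
    · obtain ⟨y, μ, hy⟩ := hv x σ z hvx
      obtain ⟨μ, rfl⟩ := hinv y μ z hy
      exact ⟨some (σ * ↑μ⁻¹, y), by simp [hy, mul_assoc]⟩
  choose d hd using pointwise
  exact ⟨d, funext hd⟩

end

theorem factorization_system_E3_M3 (M : Type) [Monoid M] :
    (∀ (X Z : Type) (f : X → Option (M × Z)),
      ∃ (Y : Type) (e : X → Option (M × Y)) (m : Y → Option (M × Z)),
        KlComp m e = f ∧ KlSurj e ∧ (KlInj m ∧ KlInv m ∧ KlTot m)) ∧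
    (∀ (X Y₁ Y₂ Z : Type) (e : X → Option (M × Y₁)) (m : Y₂ → Option (M × Z))
        (u : X → Option (M × Y₂)) (v : Y₁ → Option (M × Z)),
      KlSurj e → KlInj m → KlInv m → KlTot m →
      KlComp v e = KlComp m u →
      ∃! d : Y₁ → Option (M × Y₂), KlComp d e = u ∧ KlComp m d = v) := by
  refine ⟨fun X Z f => ⟨klImage f, klCorestrict f, KlId M Z ∘ Subtype.val,
    klComp_klCorestrict f, klSurj_klCorestrict f, klInj_klId_comp Subtype.val_injective,
    klInv_klId_comp _, klTot_klId_comp _⟩, ?_⟩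
  intro X Y₁ Y₂ Z e m u v he hinj hinv htot hsq
  obtain ⟨d, hd⟩ :=
    exists_klComp_eq_of_forall hinv fun _ _ _ => he.exists_eq_some_of_klComp_eq hsq
  have hde : KlComp d e = u :=
    klComp_left_cancel hinj hinv htot (by rw [klComp_assoc, hd, hsq])
  exact ⟨d, ⟨hde, hd⟩, fun d' hd' => klComp_left_cancel hinj hinv htot (hd'.2.trans hd.symm)⟩
end

section
/- Every Kleisli morphism f : X → Option (M × Y) admits a quaternary factorization f = f₄ ∘ f₃ ∘ f₂ ∘ f₁ (Kleisli composition) through intermediate types Z₁, Z₂, Z₃, where f₁ : X → Option (M × Z₁) belongs to Surj ∩ Inj ∩ Inv, f₂ : Z₁ → Option (M × Z₂) belongs to Surj ∩ Inj ∩ Tot, f₃ : Z₂ → Option (M × Z₃) belongs to Surj ∩ Inv ∩ Tot, and f₄ : Z₃ → Option (M × Y) belongs to Inj ∩ Inv ∩ Tot. -/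
theorem quaternary_factorization (M X Y : Type) [Monoid M]
    (f : X → Option (M × Y)) :
    ∃ (Z₁ Z₂ Z₃ : Type)
      (f₁ : X → Option (M × Z₁)) (f₂ : Z₁ → Option (M × Z₂))
      (f₃ : Z₂ → Option (M × Z₃)) (f₄ : Z₃ → Option (M × Y)),
      KlComp f₄ (KlComp f₃ (KlComp f₂ f₁)) = f ∧
      (KlSurj f₁ ∧ KlInj f₁ ∧ KlInv f₁) ∧
      (KlSurj f₂ ∧ KlInj f₂ ∧ KlTot f₂) ∧
      (KlSurj f₃ ∧ KlInv f₃ ∧ KlTot f₃) ∧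
      (KlInj f₄ ∧ KlInv f₄ ∧ KlTot f₄) := by
  classical
  refine ⟨{x : X // f x ≠ none}, {x : X // f x ≠ none},
    {y : Y // ∃ x υ, f x = some (υ, y)},
    (fun x => if h : f x = none then none else some (1, ⟨x, h⟩)),
    (fun z => some (((f z.1).get (Option.isSome_iff_ne_none.mpr z.2)).1, z)),
    (fun z => some (1, ⟨((f z.1).get (Option.isSome_iff_ne_none.mpr z.2)).2,
      z.1, ((f z.1).get (Option.isSome_iff_ne_none.mpr z.2)).1, by simp⟩)),
    (fun z => some (1, z.1)), ?_, ?_, ?_, ?_, ?_⟩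
  · funext x
    by_cases h : f x = none
    · simp [KlComp, h]
    · obtain ⟨p, hp⟩ := Option.ne_none_iff_exists'.mp h
      simp [KlComp, h, hp]
  · refine ⟨fun z => ⟨z.1, 1, by simp [z.2]⟩, fun x x' υ υ' y h h' => ?_,
      fun x υ y h => ?_⟩
    · by_cases hx : f x = none <;> by_cases hx' : f x' = none <;>
        simp [hx, hx'] at h h'
      simpa using congrArg Subtype.val (h.2.trans h'.2.symm)
    · by_cases hx : f x = none <;> simp [hx] at h
      exact h.1 ▸ isUnit_one
  · exact ⟨fun z => ⟨z, _, rfl⟩, fun x x' υ υ' y h h' => by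
      simp at h h'; rw [h.2, h'.2], fun z => by simp⟩
  · refine ⟨fun y => ?_, fun x υ y h => by simp at h; exact h.1 ▸ isUnit_one,
      fun z => by simp⟩
    obtain ⟨yv, x, υ, hx⟩ := y
    refine ⟨⟨x, by simp [hx]⟩, 1, ?_⟩
    simp only [Option.some.injEq, Prod.mk.injEq, Subtype.mk.injEq]
    exact ⟨trivial, by simp [hx]⟩
  · exact ⟨fun x x' υ υ' y h h' => by
      simp at h h'; exact Subtype.ext (h.2.trans h'.2.symm),
      fun x υ y h => by simp at h; exact h.1 ▸ isUnit_one, fun z => by simp⟩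
end

section
/- If Kl(T_M) has countable powers of 1, then there exist functions lgcd : (ℕ → Option M) → M and red : (ℕ → Option M) → (ℕ → Option M) satisfying conditions (a) and (b). -/
/-- `Λ : ℕ → Option M` is nontrivial if it is defined somewhere. -/
def NontrivialFn {M : Type} (Λ : ℕ → Option M) : Prop :=
  Λ ≠ fun _ => none

/-- `υ • Λ`, multiplying each defined value of `Λ` by `υ` on the left. -/
def smulFn {M : Type} [Monoid M] (υ : M) (Λ : ℕ → Option M) : ℕ → Option M :=
  fun n => (Λ n).map (υ * ·)

/-- The functions `lgcd` and `red` satisfy conditions (a) and (b). -/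
def SatisfiesLgcdRed (M : Type) [Monoid M] (lgcd : (ℕ → Option M) → M)
    (red : (ℕ → Option M) → (ℕ → Option M)) : Prop :=
  (∀ Λ, NontrivialFn Λ → NontrivialFn (red Λ)) ∧
  (∀ Λ, NontrivialFn Λ → Λ = smulFn (lgcd Λ) (red Λ)) ∧
  (∀ Γ Λ, NontrivialFn Γ → NontrivialFn Λ → ∀ υ ν : M,
    smulFn υ (red Γ) = smulFn ν (red Λ) → υ = ν ∧ red Γ = red Λ)
/-- `Kl(T_M)` has countable powers of `1`. -/
def HasCountablePowersOfOne (M : Type) [Monoid M] : Prop :=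
  ∃ (P : Type) (π : ℕ → P → Option (M × PUnit)),
    ∀ (X : Type) (f : ℕ → X → Option (M × PUnit)),
      ∃! h : X → Option (M × P), ∀ n, KlComp (π n) h = f n

/-!
Evaluating the projections at `p : P` gives a function `ℕ → Option M`, and a Kleisli morphism
`1 → P` is an element of `Option (M × P)`. The universal property of the power, applied to
`X = 1`, says exactly that sending `none` to the nowhere-defined function and `some (υ, p)` to
`υ •` (the coordinates of `p`) is a bijection onto `ℕ → Option M`. Writing a nontrivial `Λ` in
this form defines `lgcd Λ = υ` and `red Λ`, and injectivity of the bijection is condition (b).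
-/

section

variable {M : Type} [Monoid M] {P : Type}

def IsCountablePowerOfOne (π : ℕ → P → Option (M × PUnit)) : Prop :=
  ∀ (X : Type) (f : ℕ → X → Option (M × PUnit)),
    ∃! h : X → Option (M × P), ∀ n, KlComp (π n) h = f n

def coordFn (π : ℕ → P → Option (M × PUnit)) (p : P) : ℕ → Option M :=
  fun n => (π n p).map Prod.fst

def scaleFn (ρ : P → ℕ → Option M) : Option (M × P) → ℕ → Option M
  | none => fun _ => none
  | some (υ, p) => smulFn υ (ρ p)

theorem klComp_const (π : ℕ → P → Option (M × PUnit)) (o : Option (M × P)) (n : ℕ) :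
    KlComp (π n) (fun _ : PUnit => o) =
      fun _ => (scaleFn (coordFn π) o n).map (·, PUnit.unit) := by
  funext u
  rcases o with _ | ⟨υ, p⟩
  · rfl
  · rcases hp : π n p with _ | ⟨m, ⟨⟩⟩ <;> simp [KlComp, scaleFn, smulFn, coordFn, hp]

theorem bijective_scaleFn_coordFn {π : ℕ → P → Option (M × PUnit)}
    (hπ : IsCountablePowerOfOne π) : Function.Bijective (scaleFn (coordFn π)) := by
  constructor
  · intro o o' h
    have hu := (hπ PUnit fun n => KlComp (π n) fun _ => o).unique (y₂ := fun _ => o')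
      (fun _ => rfl) (fun n => by rw [klComp_const, klComp_const, h])
    exact congrFun hu PUnit.unit
  · intro Λ
    obtain ⟨g, hg, -⟩ := hπ PUnit fun n _ => (Λ n).map (·, PUnit.unit)
    refine ⟨g PUnit.unit, funext fun n => Option.map_injective (f := (·, PUnit.unit))
      (fun _ _ h => (Prod.mk.inj h).1) ?_⟩
    have hn := congrFun (hg n) PUnit.unit
    rwa [show g = fun _ => g PUnit.unit from rfl, klComp_const] at hn

theorem exists_satisfiesLgcdRed_of_bijective {ρ : P → ℕ → Option M}
    (hρ : Function.Bijective (scaleFn ρ)) :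
    ∃ (lgcd : (ℕ → Option M) → M) (red : (ℕ → Option M) → (ℕ → Option M)),
      SatisfiesLgcdRed M lgcd red := by
  set σ := Function.surjInv hρ.2
  have hσ : ∀ Λ, scaleFn ρ (σ Λ) = Λ := Function.surjInv_eq hρ.2
  have hsome : ∀ Λ, NontrivialFn Λ → ∃ υ p, σ Λ = some (υ, p) := by
    intro Λ hΛ
    match h : σ Λ with
    | some (υ, p) => exact ⟨υ, p, rfl⟩
    | none => exact absurd (by rw [← hσ Λ, h]; rfl) hΛ
  refine ⟨fun Λ => (σ Λ).elim 1 Prod.fst, fun Λ => (σ Λ).elim Λ (ρ ·.2), ?_, ?_, ?_⟩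
  · intro Λ hΛ hred
    obtain ⟨υ, p, hp⟩ := hsome Λ hΛ
    simp only [hp, Option.elim_some] at hred
    apply hΛ
    rw [← hσ Λ, hp]
    show smulFn υ (ρ p) = _
    rw [hred]
    rfl
  · intro Λ hΛ
    obtain ⟨υ, p, hp⟩ := hsome Λ hΛ
    simp only [hp, Option.elim_some]
    exact (hp ▸ hσ Λ).symm
  · intro Γ Λ hΓ hΛ υ ν h
    obtain ⟨_, p, hp⟩ := hsome Γ hΓ
    obtain ⟨_, q, hq⟩ := hsome Λ hΛ
    simp only [hp, hq, Option.elim_some] at h ⊢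
    have hpq := Option.some.inj (hρ.1 (a₁ := some (υ, p)) (a₂ := some (ν, q)) h)
    obtain ⟨rfl, rfl⟩ := Prod.mk.inj hpq
    exact ⟨rfl, rfl⟩

end

theorem exists_lgcd_red_of_countable_powers (M : Type) [Monoid M]
    (h : HasCountablePowersOfOne M) :
    ∃ (lgcd : (ℕ → Option M) → M) (red : (ℕ → Option M) → (ℕ → Option M)),
      SatisfiesLgcdRed M lgcd red := by
  obtain ⟨P, π, hπ⟩ := h
  exact exists_satisfiesLgcdRed_of_bijective (bijective_scaleFn_coordFn (π := π) hπ)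
end

section
/- If there exist functions lgcd : (ℕ → Option M) → M and red : (ℕ → Option M) → (ℕ → Option M) satisfying conditions (a) and (b), then Kl(T_M) has all countable products: for every family of types (X i)_{i : ℕ} there is a type P with projections πᵢ : P → Option (M × X i) such that for every type Z and every family of Kleisli morphisms fᵢ : Z → Option (M × X i) there is a unique Kleisli morphism h : Z → Option (M × P) with πᵢ ∘ h = fᵢ for all i. -/
/-! A cone `πᵢ : P → Xᵢ` in the Kleisli category is a product as soon as
`o ↦ (πᵢ ∘ o)ᵢ : Option (M × P) → ∀ i, Option (M × Xᵢ)` is bijective, because a morphism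
`Z → P` is just a `Z`-indexed family of such `o`. Take for `P` the tuples whose weight function
`i ↦ first component` is `red Γ` for some nontrivial `Γ`. Condition (a) writes every tuple with
nontrivial weights as `lgcd • (such a tuple)`, which gives surjectivity; condition (b) says that
this decomposition is unique, and the nontriviality of `red` separates it from `none`, which
gives injectivity. -/

def klTuple {M P : Type} [Monoid M] {ι : Type*} {X : ι → Type} (π : ∀ i, P → Option (M × X i))
    (o : Option (M × P)) : ∀ i, Option (M × X i) :=
  fun i => KlComp (π i) id o

theorem existsUnique_klComp_eq_of_bijective_klTuple {M P : Type} [Monoid M] {ι : Type*}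
    {X : ι → Type} (π : ∀ i, P → Option (M × X i)) (hπ : Function.Bijective (klTuple π))
    (Z : Type) (f : ∀ i, Z → Option (M × X i)) :
    ∃! g : Z → Option (M × P), ∀ i, KlComp (π i) g = f i := by
  obtain ⟨g, hg, huniq⟩ := (hπ.comp_left (α := Z)).existsUnique fun z i => f i z
  refine ⟨g, fun i => funext fun z => congrFun (congrFun hg z) i, fun g' hg' => huniq g' ?_⟩
  funext z i
  exact congrFun (hg' i) z

section Tuple

variable {M : Type} {X : ℕ → Type}

def tupleWeights (t : ∀ i, Option (M × X i)) : ℕ → Option M :=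
  fun i => (t i).map Prod.fst

theorem tupleWeights_eq_none_iff {t : ∀ i, Option (M × X i)} :
    tupleWeights t = (fun _ => none) ↔ t = fun _ => none := by
  simp only [tupleWeights, funext_iff, Option.map_eq_none_iff]

variable [Monoid M]

def tupleSmul (υ : M) (t : ∀ i, Option (M × X i)) : ∀ i, Option (M × X i) :=
  fun i => (t i).map fun q => (υ * q.1, q.2)

theorem tupleWeights_tupleSmul (υ : M) (t : ∀ i, Option (M × X i)) :
    tupleWeights (tupleSmul υ t) = smulFn υ (tupleWeights t) := by
  funext i
  simp only [tupleWeights, tupleSmul, smulFn, Option.map_map]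
  rfl

theorem NontrivialFn.smulFn {Λ : ℕ → Option M} (hΛ : NontrivialFn Λ) (υ : M) :
    NontrivialFn (smulFn υ Λ) := by
  refine fun h => hΛ (funext fun n => ?_)
  simpa only [_root_.smulFn, Option.map_eq_none_iff] using congrFun h n

theorem eq_of_tupleSmul_eq_of_tupleWeights_eq {υ : M} {t t' : ∀ i, Option (M × X i)}
    (hs : tupleSmul υ t = tupleSmul υ t') (hw : tupleWeights t = tupleWeights t') : t = t' := by
  funext i
  have hsi := congrFun hs i
  have hwi := congrFun hw i
  simp only [tupleSmul, tupleWeights] at hsi hwi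
  rcases ht : t i with _ | ⟨a, x⟩ <;> rcases ht' : t' i with _ | ⟨a', x'⟩ <;>
    simp_all

theorem exists_tupleSmul_eq_of_tupleWeights_eq_smulFn {t : ∀ i, Option (M × X i)} {υ : M}
    {Λ : ℕ → Option M} (h : tupleWeights t = smulFn υ Λ) :
    ∃ q : ∀ i, Option (M × X i), tupleWeights q = Λ ∧ tupleSmul υ q = t := by
  have hi : ∀ i, ∃ qi : Option (M × X i), qi.map Prod.fst = Λ i ∧
      qi.map (fun q => (υ * q.1, q.2)) = t i := by
    intro i
    have hwi := congrFun h i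
    simp only [tupleWeights, smulFn] at hwi
    rcases ht : t i with _ | ⟨a, x⟩ <;> rcases hΛ : Λ i with _ | m <;> simp_all
  choose q hqw hqs using hi
  exact ⟨q, funext hqw, funext hqs⟩

end Tuple

section Product

variable {M : Type} [Monoid M] {lgcd : (ℕ → Option M) → M} {red : (ℕ → Option M) → (ℕ → Option M)}

def RedTuple (red : (ℕ → Option M) → (ℕ → Option M)) (X : ℕ → Type) : Type :=
  { p : ∀ i, Option (M × X i) // ∃ Γ, NontrivialFn Γ ∧ tupleWeights p = red Γ }

def RedTuple.proj {X : ℕ → Type} (i : ℕ) (p : RedTuple red X) : Option (M × X i) :=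
  p.1 i

theorem klTuple_redTuple_injective (h : SatisfiesLgcdRed M lgcd red) (X : ℕ → Type) :
    Function.Injective (klTuple (RedTuple.proj (red := red) (X := X))) := by
  obtain ⟨hred, -, hcancel⟩ := h
  have hsome : ∀ υ (p : RedTuple red X),
      klTuple RedTuple.proj (some (υ, p)) = tupleSmul υ p.1 := fun _ _ => rfl
  have hnone : ∀ υ (p : RedTuple red X), klTuple RedTuple.proj (some (υ, p)) ≠ fun _ => none := by
    intro υ p he
    obtain ⟨Γ, hΓ, hp⟩ := p.2
    rw [hsome, ← tupleWeights_eq_none_iff, tupleWeights_tupleSmul, hp] at he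
    exact (hred Γ hΓ).smulFn υ he
  rintro (_ | ⟨υ, p⟩) (_ | ⟨ν, p'⟩) he
  · rfl
  · exact absurd he.symm (hnone ν p')
  · exact absurd he (hnone υ p)
  obtain ⟨Γ, hΓ, hp⟩ := p.2
  obtain ⟨Γ', hΓ', hp'⟩ := p'.2
  rw [hsome, hsome] at he
  have hw := congrArg tupleWeights he
  rw [tupleWeights_tupleSmul, tupleWeights_tupleSmul, hp, hp'] at hw
  obtain ⟨rfl, hΓΓ'⟩ := hcancel Γ Γ' hΓ hΓ' υ ν hw
  have hpp' : p = p' :=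
    Subtype.ext (eq_of_tupleSmul_eq_of_tupleWeights_eq he (by rw [hp, hp', hΓΓ']))
  rw [hpp']

theorem klTuple_redTuple_surjective (h : SatisfiesLgcdRed M lgcd red) (X : ℕ → Type) :
    Function.Surjective (klTuple (RedTuple.proj (red := red) (X := X))) := by
  intro t
  by_cases hΛ : NontrivialFn (tupleWeights t)
  · obtain ⟨q, hqw, hqs⟩ :=
      exists_tupleSmul_eq_of_tupleWeights_eq_smulFn (h.2.1 _ hΛ)
    exact ⟨some (lgcd (tupleWeights t), ⟨q, _, hΛ, hqw⟩), hqs⟩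
  · exact ⟨none, (tupleWeights_eq_none_iff.mp (not_not.mp hΛ)).symm⟩

end Product

theorem countable_products_of_lgcd_red (M : Type) [Monoid M]
    (lgcd : (ℕ → Option M) → M) (red : (ℕ → Option M) → (ℕ → Option M))
    (h : SatisfiesLgcdRed M lgcd red) :
    ∀ X : ℕ → Type,
      ∃ (P : Type) (π : ∀ i : ℕ, P → Option (M × X i)),
        ∀ (Z : Type) (f : ∀ i : ℕ, Z → Option (M × X i)),
          ∃! g : Z → Option (M × P), ∀ i : ℕ, KlComp (π i) g = f i :=
  fun X => ⟨RedTuple red X, RedTuple.proj, existsUnique_klComp_eq_of_bijective_klTuple _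
    ⟨klTuple_redTuple_injective h X, klTuple_redTuple_surjective h X⟩⟩
end

section
/- Suppose M is left-cancellative up to invertibles on the left, right-coprime-cancellative, and every family w : I → M indexed by a nonempty countable set I has a left-gcd that is unique up to invertibles on the right (any two left-gcds δ, δ' satisfy δ' = δ * χ for some unit χ). Then Kl(T_M) has countable powers of 1. -/
/-- `u` left-divides the family `w`. -/
def LeftDividesFam {M I : Type} [Monoid M] (u : M) (w : I → M) : Prop :=
  ∃ v : I → M, ∀ i, u * v i = w i

/-- `δ` is a left-gcd of the family `w`. -/
def IsLeftGcd {M I : Type} [Monoid M] (δ : M) (w : I → M) : Prop :=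
  LeftDividesFam δ w ∧ ∀ d : M, LeftDividesFam d w → ∃ c : M, d * c = δ

/-- The family `w` is left-coprime: every left-divisor has a right inverse. -/
def LeftCoprimeFam {M I : Type} [Monoid M] (w : I → M) : Prop :=
  ∀ d : M, LeftDividesFam d w → ∃ y : M, d * y = 1

/-- `M` is left-cancellative up to invertibles on the left. -/
def LeftCancellativeUpToInv (M : Type) [Monoid M] : Prop :=
  ∀ (I : Type) [Countable I] [Nonempty I] (w : M) (u v : I → M),
    (∀ i, w * u i = w * v i) → ∃ x : Mˣ, ∀ i, u i = ↑x * v i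

/-- `M` is right-coprime-cancellative. -/
def RightCoprimeCancellative (M : Type) [Monoid M] : Prop :=
  ∀ (I : Type) [Countable I] [Nonempty I] (u v : M) (w : I → M),
    LeftCoprimeFam w → (∀ i, u * w i = v * w i) → u = v

/-! A Kleisli morphism `X → 1` is a partial map `X ⇀ M`, so the countable power of `1` exists
as soon as some `P` with `ρ : P → ℕ → Option M` makes `(υ, p) ↦ υ • ρ p` a bijection
`Option (M × P) ≃ (ℕ → Option M)`. Take for `P` the primitive sequences (nonempty support,
left-coprime values) modulo left multiplication by units. A nonzero sequence factors as a left-gcd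
of its values times a primitive sequence, since the cofactor of a gcd is coprime by left
cancellation. Conversely, in any factorisation `υ • t` with `t` primitive, `υ` is a left-gcd of the
values; uniqueness of gcds and left cancellation then fix `t` up to a unit, and right-coprime
cancellation fixes `υ`. -/

section LeftGcd

variable {M I : Type} [Monoid M]

def HasUniqueLeftGcd (w : I → M) : Prop :=
  (∃ δ : M, IsLeftGcd δ w) ∧
    ∀ δ δ' : M, IsLeftGcd δ w → IsLeftGcd δ' w → ∃ χ : Mˣ, δ' = δ * ↑χ

theorem LeftCoprimeFam.comp_surjective {J : Type} {w : I → M} (hw : LeftCoprimeFam w)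
    {e : J → I} (he : Function.Surjective e) : LeftCoprimeFam (w ∘ e) := by
  rintro d ⟨c, hc⟩
  choose j hj using he
  exact hw d ⟨fun i => c (j i), fun i => by rw [hc, Function.comp_apply, hj]⟩

theorem leftCoprimeFam_of_isLeftGcd (hcancel : LeftCancellativeUpToInv M) {δ : M} {w v : I → M}
    (hδ : IsLeftGcd δ w) (hv : ∀ i, δ * v i = w i) : LeftCoprimeFam v := by
  rintro d ⟨c, hc⟩
  obtain ⟨e, he⟩ := hδ.2 (δ * d) ⟨c, fun i => by rw [mul_assoc, hc, hv]⟩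
  obtain ⟨x, hx⟩ := hcancel PUnit δ (fun _ => d * e) (fun _ => 1) fun _ => by
    rw [← mul_assoc, he, mul_one]
  exact ⟨e * ↑x⁻¹, by rw [← mul_assoc, hx PUnit.unit, mul_one, Units.mul_inv]⟩

theorem IsLeftGcd.of_leftCoprimeFam (hcancel : LeftCancellativeUpToInv M) [Countable I]
    [Nonempty I] {δ υ : M} {w r : I → M} (hδ : IsLeftGcd δ w) (hr : LeftCoprimeFam r)
    (h : ∀ i, υ * r i = w i) : IsLeftGcd υ w := by
  obtain ⟨e, he⟩ := hδ.2 υ ⟨r, h⟩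
  obtain ⟨c, hc⟩ := hδ.1
  obtain ⟨ξ, hξ⟩ := hcancel I υ (fun i => e * c i) r fun i => by rw [← mul_assoc, he, hc, h]
  obtain ⟨y, hy⟩ := hr (↑ξ⁻¹ * e) ⟨c, fun i => by rw [mul_assoc, hξ i, Units.inv_mul_cancel_left]⟩
  have he_inv : e * (y * ↑ξ⁻¹) = 1 :=
    calc e * (y * ↑ξ⁻¹) = ξ * (↑ξ⁻¹ * e * y) * ↑ξ⁻¹ := by simp [mul_assoc]
      _ = 1 := by rw [hy, mul_one, Units.mul_inv]
  refine ⟨⟨r, h⟩, fun d hd => ?_⟩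
  obtain ⟨c', hc'⟩ := hδ.2 d hd
  exact ⟨c' * (y * ↑ξ⁻¹), by rw [← mul_assoc, hc', ← he, mul_assoc, he_inv, mul_one]⟩

theorem exists_unit_mul_of_mul_eq_mul (hcancel : LeftCancellativeUpToInv M) [Countable I]
    [Nonempty I] {υ υ' : M} {r r' : I → M} (hgcd : HasUniqueLeftGcd fun i => υ * r i)
    (hr : LeftCoprimeFam r) (hr' : LeftCoprimeFam r') (h : ∀ i, υ * r i = υ' * r' i) :
    ∃ x : Mˣ, ∀ i, r' i = x * r i := by
  obtain ⟨δ, hδ⟩ := hgcd.1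
  obtain ⟨χ, hχ⟩ := hgcd.2 υ υ' (hδ.of_leftCoprimeFam hcancel hr fun _ => rfl)
    (hδ.of_leftCoprimeFam hcancel hr' fun i => (h i).symm)
  obtain ⟨ξ, hξ⟩ := hcancel I υ r (fun i => χ * r' i) fun i => by rw [h, hχ, mul_assoc]
  exact ⟨(ξ * χ)⁻¹, fun i => by simp [hξ i, ← mul_assoc]⟩

end LeftGcd

section PrimitiveSeq

variable {M : Type} [Monoid M]

def supportVals (t : ℕ → Option M) (i : {n // (t n).isSome}) : M :=
  (t i).get i.2

def IsPrimitiveSeq (t : ℕ → Option M) : Prop :=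
  Nonempty {n // (t n).isSome} ∧ LeftCoprimeFam (supportVals t)

theorem smul_seq_apply_coe (υ : M) (t : ℕ → Option M) (i : {n // (t n).isSome}) :
    (υ • t) i = some (υ * supportVals t i) := by
  rw [Pi.smul_apply, ← Option.some_get i.2, Option.smul_some, smul_eq_mul]
  rfl

theorem isSome_smul_seq_apply (υ : M) (t : ℕ → Option M) (n : ℕ) :
    ((υ • t) n).isSome = (t n).isSome :=
  Option.isSome_map

theorem IsPrimitiveSeq.smul_ne_none {t : ℕ → Option M} (ht : IsPrimitiveSeq t) (υ : M) :
    υ • t ≠ fun _ => none := fun h => by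
  obtain ⟨i⟩ := ht.1
  exact Option.some_ne_none _ ((smul_seq_apply_coe υ t i).symm.trans (congrFun h i))

theorem IsPrimitiveSeq.smul_left_cancel (hcoprime : RightCoprimeCancellative M)
    {t : ℕ → Option M} (ht : IsPrimitiveSeq t) {υ υ' : M} (h : υ • t = υ' • t) : υ = υ' :=
  have := ht.1
  hcoprime _ υ υ' _ ht.2 fun i => Option.some_injective _ <| by
    rw [← smul_seq_apply_coe, ← smul_seq_apply_coe, h]

theorem IsPrimitiveSeq.exists_unit_smul_eq (hcancel : LeftCancellativeUpToInv M)
    (hgcd : ∀ (I : Type) [Countable I] [Nonempty I] (w : I → M), HasUniqueLeftGcd w)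
    {t t' : ℕ → Option M} (ht : IsPrimitiveSeq t) (ht' : IsPrimitiveSeq t') {υ υ' : M}
    (h : υ • t = υ' • t') : ∃ x : Mˣ, t' = (x : M) • t := by
  have hsupp (n : ℕ) : (t n).isSome ↔ (t' n).isSome := by
    rw [← isSome_smul_seq_apply υ t, ← isSome_smul_seq_apply υ' t', h]
  let e := Equiv.subtypeEquivRight hsupp
  have := ht.1
  obtain ⟨x, hx⟩ := exists_unit_mul_of_mul_eq_mul hcancel (hgcd _ _) ht.2
    (ht'.2.comp_surjective e.surjective) fun i => Option.some_injective _ <| by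
      rw [← smul_seq_apply_coe, h]
      exact smul_seq_apply_coe υ' t' (e i)
  refine ⟨x, funext fun n => ?_⟩
  by_cases hn : (t n).isSome
  · rw [smul_seq_apply_coe _ t ⟨n, hn⟩, ← hx]
    exact (Option.some_get _).symm
  · rw [Pi.smul_apply, Option.not_isSome_iff_eq_none.1 hn,
      Option.not_isSome_iff_eq_none.1 ((hsupp n).not.1 hn), Option.smul_none]

theorem exists_isPrimitiveSeq_smul_eq (hcancel : LeftCancellativeUpToInv M)
    (hgcd : ∀ (I : Type) [Countable I] [Nonempty I] (w : I → M), HasUniqueLeftGcd w)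
    {s : ℕ → Option M} (hs : Nonempty {n // (s n).isSome}) :
    ∃ (υ : M) (t : ℕ → Option M), IsPrimitiveSeq t ∧ s = υ • t := by
  obtain ⟨δ, hδ⟩ := (hgcd _ (supportVals s)).1
  obtain ⟨v, hv⟩ := hδ.1
  let t : ℕ → Option M := fun n => if h : (s n).isSome then some (v ⟨n, h⟩) else none
  have hsupp (n : ℕ) : (t n).isSome ↔ (s n).isSome := by
    by_cases h : (s n).isSome <;> simp [t, h]
  let e := Equiv.subtypeEquivRight hsupp
  refine ⟨δ, t, ⟨hs.map e.symm, ?_⟩, funext fun n => ?_⟩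
  · convert (leftCoprimeFam_of_isLeftGcd hcancel hδ hv).comp_surjective e.surjective using 1
    funext i
    simp only [supportVals, t, e, (hsupp i).1 i.2, dif_pos, Option.get_some, Function.comp_apply]
    rfl
  · by_cases h : (s n).isSome
    · rw [smul_seq_apply_coe δ t ⟨n, (hsupp n).2 h⟩]
      simp [supportVals, t, h, hv]
    · simp [t, Option.not_isSome_iff_eq_none.1 h]

end PrimitiveSeq

section Kleisli

variable {M : Type} [Monoid M]

def scaledSeq {P : Type} (ρ : P → ℕ → Option M) (o : Option (M × P)) : ℕ → Option M :=
  o.elim (fun _ => none) fun q => q.1 • ρ q.2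

theorem hasCountablePowersOfOne_of_bijective {P : Type} (ρ : P → ℕ → Option M)
    (hρ : Function.Bijective (scaledSeq ρ)) : HasCountablePowersOfOne M := by
  let emb : M → M × PUnit := fun a => (a, PUnit.unit)
  have hemb : Function.Injective emb := fun _ _ h => congrArg Prod.fst h
  refine ⟨P, fun n p => (ρ p n).map emb, fun X f => ?_⟩
  have hcomp (h : X → Option (M × P)) (n : ℕ) (x : X) :
      KlComp (fun p => (ρ p n).map emb) h x = (scaledSeq ρ (h x) n).map emb := by
    rcases hx : h x with _ | ⟨υ, p⟩ <;>
      simp [KlComp, scaledSeq, hx, emb, Option.map_map, Function.comp_def, Option.smul_def]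
  have hf (n : ℕ) (x : X) : f n x = ((f n x).map Prod.fst).map emb := by
    simp [emb, Option.map_map, Function.comp_def]
  refine (existsUnique_congr fun h => ?_).2
    ((hρ.comp_left (α := X)).existsUnique fun x n => (f n x).map Prod.fst)
  simp only [funext_iff, Function.comp_apply, hcomp]
  refine ⟨fun H x n => Option.map_injective hemb ?_, fun H n x => ?_⟩
  · rw [H n x, ← hf]
  · rw [H x n, ← hf]

end Kleisli

section PrimitiveSeqClass

variable (M : Type) [Monoid M]

def primitiveSeqSetoid : Setoid {t : ℕ → Option M // IsPrimitiveSeq t} :=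
  (MulAction.orbitRel Mˣ (ℕ → Option M)).comap Subtype.val

abbrev PrimitiveSeqClass : Type := Quotient (primitiveSeqSetoid M)

variable {M}

theorem scaledSeq_out_injective (hcancel : LeftCancellativeUpToInv M)
    (hcoprime : RightCoprimeCancellative M)
    (hgcd : ∀ (I : Type) [Countable I] [Nonempty I] (w : I → M), HasUniqueLeftGcd w) :
    Function.Injective (scaledSeq fun p : PrimitiveSeqClass M => p.out.1) := by
  rintro (_ | ⟨υ, p⟩) (_ | ⟨υ', q⟩) h
  · rfl
  · exact absurd h.symm (q.out.2.smul_ne_none υ')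
  · exact absurd h (p.out.2.smul_ne_none υ)
  · obtain ⟨x, hx⟩ := p.out.2.exists_unit_smul_eq hcancel hgcd q.out.2 h
    obtain rfl : p = q := Quotient.out_equiv_out.1 ⟨x⁻¹, by simp [hx, Units.smul_def, smul_smul]⟩
    obtain rfl : υ = υ' := p.out.2.smul_left_cancel hcoprime h
    rfl

theorem scaledSeq_out_surjective (hcancel : LeftCancellativeUpToInv M)
    (hgcd : ∀ (I : Type) [Countable I] [Nonempty I] (w : I → M), HasUniqueLeftGcd w) :
    Function.Surjective (scaledSeq fun p : PrimitiveSeqClass M => p.out.1) := by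
  intro s
  by_cases hs : Nonempty {n // (s n).isSome}
  · obtain ⟨υ, t, ht, rfl⟩ := exists_isPrimitiveSeq_smul_eq hcancel hgcd hs
    obtain ⟨x, hx⟩ := Quotient.mk_out (s := primitiveSeqSetoid M) ⟨t, ht⟩
    refine ⟨some (υ * ↑x⁻¹, ⟦⟨t, ht⟩⟧), ?_⟩
    simp [scaledSeq, ← hx, Units.smul_def, smul_smul, mul_assoc]
  · refine ⟨none, funext fun n => ?_⟩
    exact (Option.not_isSome_iff_eq_none.1 fun h => hs ⟨⟨n, h⟩⟩).symm

end PrimitiveSeqClass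

theorem countable_powers_of_monoid_properties (M : Type) [Monoid M]
    (hcancel : LeftCancellativeUpToInv M)
    (hcoprime : RightCoprimeCancellative M)
    (hgcd : ∀ (I : Type) [Countable I] [Nonempty I] (w : I → M),
      (∃ δ : M, IsLeftGcd δ w) ∧
      (∀ δ δ' : M, IsLeftGcd δ w → IsLeftGcd δ' w →
        ∃ χ : Mˣ, δ' = δ * ↑χ)) :
    HasCountablePowersOfOne M :=
  hasCountablePowersOfOne_of_bijective _
    ⟨scaledSeq_out_injective hcancel hcoprime hgcd, scaledSeq_out_surjective hcancel hgcd⟩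
end

section
/- Let M be a monoid and X a type. X is M-noetherian if and only if X is finite, where X is M-noetherian means: for every sequence of types (Xₙ)_{n : ℕ}, Kleisli morphisms xₙ : Xₙ → Option (M × X) each belonging to Inj ∩ Inv ∩ Tot, and Kleisli morphisms mₙ : Xₙ → Option (M × X_{n+1}) each belonging to Inj ∩ Inv ∩ Tot, such that x_{n+1} ∘ mₙ = xₙ (Kleisli composition) for all n, the set {n : ℕ | mₙ is not a Kleisli isomorphism} is finite. -/
/-- `X` is `M`-noetherian: every chain of `Inj ∩ Inv ∩ Tot`-subobjects of `X`
has only finitely many non-isomorphisms. -/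
def MNoetherian (M : Type) [Monoid M] (X : Type) : Prop :=
  ∀ (Xs : ℕ → Type)
    (x : ∀ n : ℕ, Xs n → Option (M × X))
    (m : ∀ n : ℕ, Xs n → Option (M × Xs (n + 1))),
    (∀ n, KlInj (x n) ∧ KlInv (x n) ∧ KlTot (x n)) →
    (∀ n, KlInj (m n) ∧ KlInv (m n) ∧ KlTot (m n)) →
    (∀ n, KlComp (x (n + 1)) (m n) = x n) →
    {n : ℕ | ¬ IsKlIso (m n)}.Finite

private lemma klIso_of_surj {M A B : Type} [Monoid M] (f : A → Option (M × B))
    (hInj : KlInj f) (hInv : KlInv f) (hTot : KlTot f) (hSurj : KlSurj f) :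
    IsKlIso f := by
  choose s u hs using hSurj
  have hu : ∀ b, IsUnit (u b) := fun b => hInv _ _ _ (hs b)
  choose w hw using hu
  refine ⟨fun b => some (↑(w b)⁻¹, s b), ?_, ?_⟩
  · funext a
    obtain ⟨⟨υ, y⟩, hfa⟩ := Option.ne_none_iff_exists'.mp (hTot a)
    have ha : s y = a := hInj _ _ _ _ _ (hs y) hfa
    have hυ : υ = u y := by
      have := (hs y).symm.trans (ha ▸ hfa)
      simpa using this.symm
    simp only [KlComp, KlId, hfa, Option.bind_some, Option.map_some]
    simp [hυ, ← hw y, Units.mul_inv, ha]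
  · funext b
    simp only [KlComp, KlId, Option.bind_some, hs b, Option.map_some]
    simp [hs, ← hw, Units.inv_mul]

theorem mNoetherian_iff_finite (M X : Type) [Monoid M] :
    MNoetherian M X ↔ Finite X := by
  constructor
  · -- Noetherian → Finite, by contraposition
    intro hN
    by_contra hX
    have : Infinite X := not_finite_iff_infinite.mp hX
    let e : ℤ ↪ X := (Denumerable.eqv ℤ).toEmbedding.trans (Infinite.natEmbedding X)
    have hfin := hN (fun _ => ℕ)
      (fun n k => some (1, e ((k : ℤ) - n)))
      (fun _ k => some (1, k + 1))
      (by
        intro n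
        refine ⟨?_, ?_, ?_⟩
        · intro k k' υ υ' y h h'
          simp only [Option.some.injEq, Prod.mk.injEq] at h h'
          obtain ⟨-, h2⟩ := h
          obtain ⟨-, h2'⟩ := h'
          have h3 : (k : ℤ) - n = (k' : ℤ) - n := e.injective (h2.trans h2'.symm)
          have h4 : (k : ℤ) = k' := by linarith
          exact_mod_cast h4
        · intro k υ y h
          simp only [Option.some.injEq, Prod.mk.injEq] at h
          exact h.1 ▸ isUnit_one
        · intro k; simp)
      (by
        intro n
        refine ⟨?_, ?_, ?_⟩
        · intro k k' υ υ' y h h'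
          simp only [Option.some.injEq, Prod.mk.injEq] at h h'
          obtain ⟨-, h2⟩ := h
          obtain ⟨-, h2'⟩ := h'
          exact Nat.succ_injective (h2.trans h2'.symm)
        · intro k υ y h
          simp only [Option.some.injEq, Prod.mk.injEq] at h
          exact h.1 ▸ isUnit_one
        · intro k; simp)
      (by
        intro n
        funext k
        simp only [KlComp, Option.bind_some, Option.map_some, one_mul, mul_one]
        congr 2
        push_cast
        ring_nf)
    have hall : ∀ n : ℕ, ¬ IsKlIso (fun k : ℕ => some ((1 : M), k + 1)) := by
      rintro n ⟨g, _, h2⟩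
      have h0 := congrFun h2 0
      simp only [KlComp, KlId] at h0
      rcases hg : g 0 with _ | ⟨υ, a⟩
      · rw [hg] at h0; simp at h0
      · rw [hg] at h0; simp at h0
    have : {n : ℕ | ¬ IsKlIso (fun k : ℕ => some ((1 : M), k + 1))} = Set.univ :=
      Set.eq_univ_of_forall hall
    rw [this] at hfin
    exact Set.infinite_univ hfin
  · -- Finite → Noetherian
    intro hX Xs x m hx hm hcomp
    classical
    -- underlying injections into X
    have hx' : ∀ n (a : Xs n), ∃ p : M × X, x n a = some p := by
      intro n a
      exact Option.ne_none_iff_exists'.mp ((hx n).2.2 a)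
    choose px hpx using hx'
    have hφinj : ∀ n, Function.Injective (fun a => (px n a).2) := by
      intro n a a' h
      exact (hx n).1 a a' (px n a).1 (px n a').1 (px n a).2 (hpx n a)
        (by rw [hpx n a']; simp [Prod.ext_iff, h])
    have hfinXs : ∀ n, Finite (Xs n) :=
      fun n => Finite.of_injective _ (hφinj n)
    -- underlying injections along the chain
    have hm' : ∀ n (a : Xs n), ∃ p : M × Xs (n + 1), m n a = some p := by
      intro n a
      exact Option.ne_none_iff_exists'.mp ((hm n).2.2 a)
    choose pm hpm using hm'
    set ψ : ∀ n, Xs n → Xs (n + 1) := fun n a => (pm n a).2 with hψ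
    have hψinj : ∀ n, Function.Injective (ψ n) := by
      intro n a a' h
      exact (hm n).1 a a' (pm n a).1 (pm n a').1 (pm n a).2 (hpm n a)
        (by rw [hpm n a', show (pm n a).2 = (pm n a').2 from h])
    set c : ℕ → ℕ := fun n => Nat.card (Xs n) with hc
    have hmono : ∀ n, c n ≤ c (n + 1) := by
      intro n
      have := hfinXs (n + 1)
      exact Nat.card_le_card_of_injective (ψ n) (hψinj n)
    have hMono : Monotone c := monotone_nat_of_le_succ hmono
    have hbound : ∀ n, c n ≤ Nat.card X := by
      intro n
      exact Nat.card_le_card_of_injective _ (hφinj n)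
    -- if cards are equal, m n is an iso
    have hiso : ∀ n, c n = c (n + 1) → IsKlIso (m n) := by
      intro n hcn
      have h1 := hfinXs n
      have h2 := hfinXs (n + 1)
      have hbij : Function.Bijective (ψ n) := by
        have := Fintype.ofFinite (Xs n)
        have := Fintype.ofFinite (Xs (n + 1))
        rw [Fintype.bijective_iff_injective_and_card]
        refine ⟨hψinj n, ?_⟩
        simpa [hc, Nat.card_eq_fintype_card] using hcn
      refine klIso_of_surj (m n) (hm n).1 (hm n).2.1 (hm n).2.2 ?_
      intro b
      obtain ⟨a, ha⟩ := hbij.2 b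
      exact ⟨a, (pm n a).1, by rw [hpm n a]; simp [Prod.ext_iff, ψ] at ha ⊢; exact ha⟩
    -- bad set is contained in the finite set of strict increases
    have hsub : {n : ℕ | ¬ IsKlIso (m n)} ⊆ {n : ℕ | c n < c (n + 1)} := by
      intro n hn
      rcases lt_or_eq_of_le (hmono n) with h | h
      · exact h
      · exact absurd (hiso n h) hn
    refine Set.Finite.subset ?_ hsub
    rw [← Set.finite_coe_iff]
    refine Finite.of_injective
      (fun p : {n : ℕ | c n < c (n + 1)} => (⟨c p.1, Nat.lt_succ_of_le (hbound p.1)⟩ :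
        Fin (Nat.card X + 1))) ?_
    rintro ⟨a, ha⟩ ⟨b, hb⟩ h
    simp only [Fin.mk.injEq] at h
    simp only [Set.mem_setOf_eq] at ha hb
    rcases lt_trichotomy a b with hab | hab | hab
    · have : c (a + 1) ≤ c b := hMono hab
      omega
    · simpa using hab
    · have : c (b + 1) ≤ c a := hMono hab
      omega
end

section
/- Let M be a monoid and X a type. X is E-artinian if and only if X is finite and (M is right-noetherian or X is empty), where X is E-artinian means: for every sequence of types (Xₙ)_{n : ℕ}, Kleisli morphisms eₙ : X → Option (M × Xₙ) each belonging to Surj, and Kleisli morphisms fₙ : X_{n+1} → Option (M × Xₙ) each belonging to Surj, such that fₙ ∘ e_{n+1} = eₙ (Kleisli composition) for all n, the set {n : ℕ | fₙ is not a Kleisli isomorphism} is finite. -/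
/-- `X` is `E`-artinian: every cochain of `Surj`-quotients of `X`
has only finitely many non-isomorphisms. -/
def EArtinian (M : Type) [Monoid M] (X : Type) : Prop :=
  ∀ (Xs : ℕ → Type)
    (e : ∀ n : ℕ, X → Option (M × Xs n))
    (f : ∀ n : ℕ, Xs (n + 1) → Option (M × Xs n)),
    (∀ n, KlSurj (e n)) →
    (∀ n, KlSurj (f n)) →
    (∀ n, KlComp (f n) (e (n + 1)) = e n) →
    {n : ℕ | ¬ IsKlIso (f n)}.Finite

open Filter

section Surj

variable {M X Y : Type} {f : X → Option (M × Y)}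

theorem KlSurj.exists_injective_section (hf : KlSurj f) :
    ∃ s : Y → X, Function.Injective s ∧ ∀ y, ∃ υ, f (s y) = some (υ, y) := by
  choose s υ hs using hf
  refine ⟨s, fun y y' h => ?_, fun y => ⟨υ y, hs y⟩⟩
  have := (hs y).symm.trans (h ▸ hs y')
  simp_all

theorem KlSurj.finite [Finite X] (hf : KlSurj f) : Finite Y :=
  let ⟨_, hs, _⟩ := hf.exists_injective_section
  Finite.of_injective _ hs

theorem KlSurj.card_le [Finite X] (hf : KlSurj f) : Nat.card Y ≤ Nat.card X :=
  let ⟨_, hs, _⟩ := hf.exists_injective_section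
  Nat.card_le_card_of_injective _ hs

theorem KlSurj.klTot_klInj_of_card_le [Finite X] (hf : KlSurj f)
    (hcard : Nat.card X ≤ Nat.card Y) : KlTot f ∧ KlInj f := by
  obtain ⟨s, hs, hfs⟩ := hf.exists_injective_section
  have hbij := hs.bijective_of_nat_card_le hcard
  have hf_eq : ∀ {x υ y}, f x = some (υ, y) → x = s y := by
    intro x υ y hx
    obtain ⟨y', rfl⟩ := hbij.2 x
    obtain ⟨υ', hυ'⟩ := hfs y'
    simp_all
  refine ⟨fun x hnone => ?_, fun x x' υ υ' y hx hx' => (hf_eq hx).trans (hf_eq hx').symm⟩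
  obtain ⟨y, rfl⟩ := hbij.2 x
  obtain ⟨υ, hυ⟩ := hfs y
  simp_all

theorem eventually_klTot_klInj {Xs : ℕ → Type} [Finite X] {e : ∀ n, X → Option (M × Xs n)}
    {f : ∀ n, Xs (n + 1) → Option (M × Xs n)} (he : ∀ n, KlSurj (e n)) (hf : ∀ n, KlSurj (f n)) :
    ∀ᶠ n in atTop, KlTot (f n) ∧ KlInj (f n) := by
  have := fun n => (he n).finite
  -- `|Xs n|` is non-decreasing and bounded by `|X|`, hence eventually constant.
  have hmono : Monotone fun n => Nat.card (Xs n) := monotone_nat_of_le_succ fun n => (hf n).card_le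
  obtain ⟨_, ⟨N, rfl⟩, hN⟩ := Set.exists_max_image _ id
    ((Set.finite_Iic (Nat.card X)).subset (Set.range_subset_iff.2 fun n => (he n).card_le))
    (Set.range_nonempty fun n => Nat.card (Xs n))
  filter_upwards [eventually_ge_atTop N] with n hn
  exact (hf n).klTot_klInj_of_card_le ((hN _ ⟨n + 1, rfl⟩).trans (hmono hn))

end Surj

variable {M : Type} [Monoid M] {X Y : Type}

theorem klComp_eq_some {Z : Type} {g : Y → Option (M × Z)} {f : X → Option (M × Y)}
    {x : X} {c : M} {z : Z} :
    KlComp g f x = some (c, z) ↔ ∃ a y b, f x = some (a, y) ∧ g y = some (b, z) ∧ a * b = c := by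
  simp only [KlComp, Option.bind_eq_some_iff, Option.map_eq_some_iff, Prod.exists, Prod.mk.injEq]
  aesop

theorem isKlIso_iff {f : X → Option (M × Y)} :
    IsKlIso f ↔ KlTot f ∧ KlInj f ∧ KlSurj f ∧ KlInv f := by
  constructor
  · rintro ⟨g, hgf, hfg⟩
    have hx : ∀ x, ∃ a y b, f x = some (a, y) ∧ g y = some (b, x) ∧ a * b = 1 :=
      fun x => klComp_eq_some.1 (congrFun hgf x)
    have hy : ∀ y, ∃ b x a, g y = some (b, x) ∧ f x = some (a, y) ∧ b * a = 1 :=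
      fun y => klComp_eq_some.1 (congrFun hfg y)
    refine ⟨fun x hnone => ?_, fun x x' υ υ' y h h' => ?_, fun y => ?_, fun x υ y h => ?_⟩
    · obtain ⟨a, y, b, hfx, -⟩ := hx x
      simp [hnone] at hfx
    · obtain ⟨a, y₁, b, hfx, hgy, -⟩ := hx x
      obtain ⟨a', y₂, b', hfx', hgy', -⟩ := hx x'
      simp_all
    · obtain ⟨b, x, a, -, hfx, -⟩ := hy y
      exact ⟨x, a, hfx⟩
    · obtain ⟨a, y₁, b, hfx, hgy, hab⟩ := hx x
      obtain ⟨b', x', a', hgy', hfx', hba⟩ := hy y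
      simp_all only [Option.some.injEq, Prod.mk.injEq]
      exact isUnit_iff_exists.2 ⟨b, hab, hba⟩
  · rintro ⟨hTot, hInj, hSurj, hInv⟩
    choose s υ hs using hSurj
    refine ⟨fun y => some (↑(hInv _ _ _ (hs y)).unit⁻¹, s y), funext fun x => ?_,
      funext fun y => klComp_eq_some.2 ⟨_, _, _, rfl, hs y, IsUnit.val_inv_mul _⟩⟩
    obtain ⟨⟨a, y⟩, hfx⟩ := Option.ne_none_iff_exists'.1 (hTot x)
    obtain rfl : x = s y := hInj _ _ _ _ _ hfx (hs y)
    obtain rfl : υ y = a := by simpa [hs y] using hfx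
    exact klComp_eq_some.2 ⟨_, _, _, hfx, rfl, IsUnit.mul_val_inv _⟩

theorem exists_eq_mul_mul_of_lt {v w : ℕ → M} {a b : ℕ} (h : ∀ n ≥ a, v n = v (n + 1) * w n)
    (hab : a < b) : ∃ c, v a = v b * (c * w a) := by
  induction b, hab using Nat.le_induction with
  | base => exact ⟨1, by rw [one_mul, h a le_rfl]⟩
  | succ b hb ih =>
    obtain ⟨c, hc⟩ := ih
    exact ⟨w b * c, by rw [hc, h b (by omega), mul_assoc, mul_assoc]⟩

namespace RightNoetherian

theorem isUnit_of_mul_eq_one (hM : RightNoetherian M) {a b : M} (hab : a * b = 1) : IsUnit b :=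
  let ⟨_, hn⟩ := hM (fun _ => b) (fun n => a ^ n) fun n => by rw [pow_succ, mul_assoc, hab, mul_one]
  hn

theorem isUnit_of_isUnit_mul (hM : RightNoetherian M) {a b : M} (hab : IsUnit (a * b)) :
    IsUnit b := by
  obtain ⟨c, hc⟩ := hab.exists_right_inv
  have hbc : IsUnit (b * c) := hM.isUnit_of_mul_eq_one (by rwa [← mul_assoc])
  have ha : IsUnit a := (Units.isUnit_mul_units a hbc.unit).1 <| by
    rw [hbc.unit_spec, ← mul_assoc, hc]
    exact isUnit_one
  exact (Units.isUnit_units_mul ha.unit b).1 (by rwa [ha.unit_spec])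

theorem eventually_isUnit (hM : RightNoetherian M) {v w : ℕ → M}
    (h : ∀ᶠ n in atTop, v n = v (n + 1) * w n) : ∀ᶠ n in atTop, IsUnit (w n) := by
  obtain ⟨N, hN⟩ := eventually_atTop.1 h
  by_contra hfin
  have hinf : {n | ¬IsUnit (w n) ∧ N ≤ n}.Infinite := Nat.frequently_atTop_iff_infinite.1
    ((not_eventually.1 hfin).and_eventually (eventually_ge_atTop N))
  set t := Nat.nth fun n => ¬IsUnit (w n) ∧ N ≤ n
  have ht := Nat.nth_mem_of_infinite hinf
  have hstep (k : ℕ) : ∃ c, v (t k) = v (t (k + 1)) * (c * w (t k)) :=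
    exists_eq_mul_mul_of_lt (fun n hn => hN n ((ht k).2.trans hn))
      (Nat.nth_strictMono hinf k.lt_succ_self)
  choose c hc using hstep
  obtain ⟨k, hk⟩ := hM _ _ hc
  exact (ht k).1 (hM.isUnit_of_isUnit_mul hk)

end RightNoetherian

theorem eventually_isUnit_of_klComp_eq {Xs : ℕ → Type} (hM : RightNoetherian M)
    {e : ∀ n, X → Option (M × Xs n)} {f : ∀ n, Xs (n + 1) → Option (M × Xs n)}
    (hc : ∀ n, KlComp (f n) (e (n + 1)) = e n) (x : X) :
    ∀ᶠ n in atTop, ∀ a y b z, e (n + 1) x = some (a, y) → f n y = some (b, z) → IsUnit b := by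
  by_cases hdom : ∃ m, e m x ≠ none
  · obtain ⟨m, hm⟩ := hdom
    have hsome : ∀ n ≥ m, e n x ≠ none := by
      intro n hn
      induction n, hn using Nat.le_induction with
      | base => exact hm
      | succ n _ ih =>
        intro hnone
        exact ih (by rw [← hc n]; simp [KlComp, hnone])
    -- The labels of `e n x` and of the arrow of `f n` that `x` passes through; the default `1`
    -- is never read, as `e n x` is defined for `n ≥ m`.
    let v n := ((e n x).map Prod.fst).getD 1
    let w n := (((e (n + 1) x).bind fun p => f n p.2).map Prod.fst).getD 1
    have hrel : ∀ n ≥ m, v n = v (n + 1) * w n := by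
      intro n hn
      obtain ⟨⟨c, z⟩, hz⟩ := Option.ne_none_iff_exists'.1 (hsome n hn)
      obtain ⟨a, y, b, hy, hyz, rfl⟩ := klComp_eq_some.1 ((congrFun (hc n) x).trans hz)
      simp [v, w, hz, hy, hyz]
    filter_upwards [hM.eventually_isUnit (eventually_atTop.2 ⟨m, hrel⟩)]
      with n hn a y b z hy hyz
    simpa [w, hy, hyz] using hn
  · push Not at hdom
    exact Eventually.of_forall fun n a y b z hy => by simp [hdom] at hy

theorem EArtinian.of_finite [Finite X] (hM : RightNoetherian M ∨ IsEmpty X) : EArtinian M X := by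
  intro Xs e f he hf hc
  have hunit : ∀ᶠ n in atTop, ∀ x a y b z,
      e (n + 1) x = some (a, y) → f n y = some (b, z) → IsUnit b :=
    eventually_all.2 fun x =>
      eventually_isUnit_of_klComp_eq (hM.resolve_right fun h => h.false x) hc x
  refine eventually_cofinite.1 ?_
  rw [Nat.cofinite_eq_atTop]
  filter_upwards [eventually_klTot_klInj he hf, hunit] with n ⟨htot, hinj⟩ hu
  refine isKlIso_iff.2 ⟨htot, hinj, hf n, fun y b z hyz => ?_⟩
  obtain ⟨x, a, hx⟩ := he (n + 1) y
  exact hu x a y b z hx hyz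

theorem EArtinian.exists_isKlIso (h : EArtinian M X) {Xs : ℕ → Type}
    {e : ∀ n, X → Option (M × Xs n)} {f : ∀ n, Xs (n + 1) → Option (M × Xs n)}
    (he : ∀ n, KlSurj (e n)) (hf : ∀ n, KlSurj (f n)) (hc : ∀ n, KlComp (f n) (e (n + 1)) = e n) :
    ∃ n, IsKlIso (f n) := by
  by_contra hne
  push Not at hne
  exact Set.infinite_univ ((h Xs e f he hf hc).subset fun n _ => hne n)

theorem EArtinian.rightNoetherian [Nonempty X] (h : EArtinian M X) : RightNoetherian M := by
  intro u v huv
  obtain ⟨n, hn⟩ := h.exists_isKlIso (Xs := fun _ => Unit) (e := fun n _ => some (v n, ()))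
    (f := fun n _ => some (u n, ())) (fun n _ => ⟨Classical.arbitrary X, v n, rfl⟩)
    (fun n _ => ⟨(), u n, rfl⟩) (fun n => funext fun _ => by simp [KlComp, huv n])
  exact ⟨n, (isKlIso_iff.1 hn).2.2.2 () (u n) () rfl⟩

theorem EArtinian.finite (h : EArtinian M X) : Finite X := by
  by_contra hX
  have : Infinite X := not_finite_iff_infinite.1 hX
  obtain ⟨π, hπ⟩ : ∃ π : X → ℕ, Function.Surjective π :=
    ⟨_, Function.invFun_surjective (Infinite.natEmbedding X).injective⟩
  -- Truncate a surjection `X → ℕ` at `n`; each `f n` identifies `n` with `n + 1`.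
  obtain ⟨n, hn⟩ := h.exists_isKlIso (Xs := fun n => Fin (n + 1))
    (e := fun n x => some (1, Fin.clamp (π x) n)) (f := fun n k => some (1, Fin.clamp k n))
    (fun n k => let ⟨x, hx⟩ := hπ k; ⟨x, 1, by simp [Fin.clamp, hx, k.is_le]⟩)
    (fun n k => ⟨k.castSucc, 1, by simp [Fin.clamp, k.is_le]⟩)
    (fun n => funext fun x => by simp [KlComp, Fin.clamp])
  have := (isKlIso_iff.1 hn).2.1 (Fin.last (n + 1)) (Fin.last n).castSucc 1 1 (Fin.last n)
    (by simp [Fin.clamp, Fin.ext_iff]) (by simp [Fin.clamp, Fin.ext_iff])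
  simp [Fin.ext_iff] at this

theorem eArtinian_iff (M X : Type) [Monoid M] :
    EArtinian M X ↔ (Finite X ∧ (RightNoetherian M ∨ IsEmpty X)) := by
  refine ⟨fun h => ⟨h.finite, ?_⟩, fun ⟨_, hM⟩ => .of_finite hM⟩
  cases isEmpty_or_nonempty X
  · exact .inr ‹_›
  · exact .inl h.rightNoetherian
end

section
/- Let M be a monoid, A a countable type, L : List A → Option M, and let (S, init, t, step) be an M-transducer recognizing L. Define the initial transducer I_L = (List A, some (1, []), L, step₀) where step₀ a w = some (1, w ++ [a]); then I_L recognizes L, and the function f : List A → Option (M × S) given by f w = init ⊙† w is a transducer morphism from I_L to (S, init, t, step), and it is the unique transducer morphism from I_L to (S, init, t, step). -/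
/-- Kleisli extension of `f : X → Option (M × Y)` to `Option (M × X)`. -/
def klExt {M X Y : Type} [Monoid M] (f : X → Option (M × Y)) :
    Option (M × X) → Option (M × Y) :=
  fun c => c.bind fun p => (f p.2).map fun q => (p.1 * q.1, q.2)

/-- Run a transducer's transition function along a word, from configuration `c`. -/
def runWord {M A S : Type} [Monoid M] (step : A → S → Option (M × S))
    (c : Option (M × S)) (w : List A) : Option (M × S) :=
  w.foldl (fun c a => klExt (step a) c) c

/-- Kleisli extension of the termination function `t : S → Option M`
(identifying `Option M` with `Option (M × PUnit)`). -/
def outExt {M S : Type} [Monoid M] (t : S → Option M) :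
    Option (M × S) → Option M :=
  fun c => c.bind fun p => (t p.2).map (p.1 * ·)

/-- The transducer `(S, init, t, step)` recognizes the language `L`. -/
def Recognizes {M A S : Type} [Monoid M] (init : Option (M × S))
    (t : S → Option M) (step : A → S → Option (M × S))
    (L : List A → Option M) : Prop :=
  ∀ w : List A, L w = outExt t (runWord step init w)

/-- `f` is a transducer morphism from `(S₁, init₁, t₁, step₁)` to
`(S₂, init₂, t₂, step₂)`. -/
def IsTransducerHom {M A S₁ S₂ : Type} [Monoid M]
    (init₁ : Option (M × S₁)) (t₁ : S₁ → Option M)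
    (step₁ : A → S₁ → Option (M × S₁))
    (init₂ : Option (M × S₂)) (t₂ : S₂ → Option M)
    (step₂ : A → S₂ → Option (M × S₂))
    (f : S₁ → Option (M × S₂)) : Prop :=
  klExt f init₁ = init₂ ∧
  (∀ s : S₁, t₁ s = outExt t₂ (f s)) ∧
  (∀ (a : A) (s : S₁), klExt f (step₁ a s) = klExt (step₂ a) (f s))


lemma klExt_one {M X Y : Type} [Monoid M] (f : X → Option (M × Y)) (x : X) :
    klExt f (some (1, x)) = f x := by
  cases h : f x <;> simp [klExt, h]

lemma runWord_append {M A S : Type} [Monoid M] (step : A → S → Option (M × S))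
    (c : Option (M × S)) (w : List A) (a : A) :
    runWord step c (w ++ [a]) = klExt (step a) (runWord step c w) := by
  simp [runWord, List.foldl_append]

lemma runWord_init {M A : Type} [Monoid M] (u w : List A) :
    runWord (fun (a : A) (w : List A) => some ((1 : M), w ++ [a]))
      (some ((1 : M), u)) w = some ((1 : M), u ++ w) := by
  induction w generalizing u with
  | nil => simp [runWord]
  | cons a w ih =>
      simp only [runWord, List.foldl_cons] at *
      rw [klExt_one, ih]
      simp

theorem initial_transducer (M A S : Type) [Monoid M] [Countable A]
    (L : List A → Option M)
    (init : Option (M × S)) (t : S → Option M)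
    (step : A → S → Option (M × S))
    (hrec : Recognizes init t step L) :
    Recognizes (some ((1 : M), ([] : List A))) L
      (fun (a : A) (w : List A) => some ((1 : M), w ++ [a])) L ∧
    IsTransducerHom (some ((1 : M), ([] : List A))) L
      (fun (a : A) (w : List A) => some ((1 : M), w ++ [a]))
      init t step
      (fun w : List A => runWord step init w) ∧
    (∀ g : List A → Option (M × S),
      IsTransducerHom (some ((1 : M), ([] : List A))) L
        (fun (a : A) (w : List A) => some ((1 : M), w ++ [a]))
        init t step g →
      g = fun w : List A => runWord step init w) := by
  refine ⟨?_, ⟨?_, ?_, ?_⟩, ?_⟩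
  · intro w
    rw [show (some ((1 : M), ([] : List A))) = some ((1:M), ([]:List A)) from rfl,
      runWord_init]
    cases h : L w <;> simp [outExt, h]
  · rw [klExt_one]
    simp [runWord]
  · intro s; exact hrec s
  · intro a w
    rw [klExt_one, ← runWord_append]
  · rintro g ⟨h1, _, h3⟩
    funext w
    induction w using List.reverseRecOn with
    | nil =>
        rw [klExt_one] at h1
        simpa [runWord] using h1
    | append_singleton w a ih =>
        have := h3 a w
        rw [klExt_one] at this
        rw [this, ih, ← runWord_append]
end

section
/- Suppose lgcd and red satisfy conditions (a) and (b). Let Irr be the set of functions of the form red Λ for Λ : ℕ → Option M nontrivial, and define projections πₙ : Irr → Option (M × PUnit) by πₙ Λ = (Λ n).map (fun υ => (υ, PUnit.unit)). Then (Irr, (πₙ)_{n : ℕ}) is a product of ℕ-many copies of PUnit in Kl(T_M): for every type X and every family of Kleisli morphisms fₙ : X → Option (M × PUnit), there is a unique Kleisli morphism h : X → Option (M × Irr) such that πₙ ∘ h = fₙ (Kleisli composition) for all n. -/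
/-- The set of irreducible partial functions: the image of `red` on
nontrivial functions. -/
def Irr {M : Type} (red : (ℕ → Option M) → (ℕ → Option M)) : Type :=
  {Λ : ℕ → Option M // ∃ Γ : ℕ → Option M, NontrivialFn Γ ∧ red Γ = Λ}

/-!
A Kleisli morphism `X → Option (M × PUnit)` is just a partial function `X → Option M`, so a
family `(fₙ)` is a single map `X → (ℕ → Option M)`. Reading `some (υ, Λ)` as `υ • Λ` and `none`
as the nowhere defined function identifies `Option (M × Irr)` with `ℕ → Option M`: condition (a)
makes this surjective and condition (b) makes it injective. Under this identification the
equations `πₙ ∘ g = fₙ` say that `g` followed by it is the map given by `(fₙ)`, so `g` exists and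
is unique.
-/

theorem nontrivialFn_smulFn_iff {M : Type} [Monoid M] {υ : M} {Λ : ℕ → Option M} :
    NontrivialFn (smulFn υ Λ) ↔ NontrivialFn Λ := by
  simp only [NontrivialFn, ne_eq, funext_iff, smulFn, Option.map_eq_none_iff]

namespace Irr

variable {M : Type} [Monoid M] {red : (ℕ → Option M) → (ℕ → Option M)}

def toFn (red : (ℕ → Option M) → (ℕ → Option M)) : Option (M × Irr red) → ℕ → Option M
  | none => fun _ => none
  | some (υ, Λ) => smulFn υ Λ.1

theorem nontrivialFn_toFn_some (hred : ∀ Λ, NontrivialFn Λ → NontrivialFn (red Λ))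
    (p : M × Irr red) : NontrivialFn (toFn red (some p)) := by
  obtain ⟨υ, Λ, Γ, hΓ, rfl⟩ := p
  exact nontrivialFn_smulFn_iff.2 (hred Γ hΓ)

theorem toFn_bijective {lgcd : (ℕ → Option M) → M} (h : SatisfiesLgcdRed M lgcd red) :
    Function.Bijective (toFn red) := by
  obtain ⟨hred, hsplit, hunique⟩ := h
  constructor
  · rintro (_ | p) (_ | q) hpq
    · rfl
    · exact absurd hpq.symm (nontrivialFn_toFn_some hred q)
    · exact absurd hpq (nontrivialFn_toFn_some hred p)
    · obtain ⟨υ, Λ, Γ, hΓ, rfl⟩ := p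
      obtain ⟨ν, Λ', Γ', hΓ', rfl⟩ := q
      obtain ⟨rfl, hred_eq⟩ := hunique Γ Γ' hΓ hΓ' υ ν hpq
      simp only [hred_eq]
  · intro Γ
    by_cases hΓ : NontrivialFn Γ
    · exact ⟨some (lgcd Γ, ⟨red Γ, Γ, hΓ, rfl⟩), (hsplit Γ hΓ).symm⟩
    · exact ⟨none, (not_not.1 hΓ).symm⟩

theorem klComp_proj_apply {X : Type} (g : X → Option (M × Irr red)) (n : ℕ) (x : X) :
    KlComp (fun Λ : Irr red => (Λ.1 n).map fun υ => (υ, PUnit.unit)) g x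
      = (toFn red (g x) n).map fun υ => (υ, PUnit.unit) := by
  simp only [KlComp]
  rcases g x with _ | ⟨υ, Λ⟩
  · rfl
  · simp only [Option.bind_some, toFn, smulFn, Option.map_map]
    rfl

theorem klComp_proj_eq_iff {X : Type} (g : X → Option (M × Irr red))
    (f : ℕ → X → Option (M × PUnit)) :
    (∀ n, KlComp (fun Λ : Irr red => (Λ.1 n).map fun υ => (υ, PUnit.unit)) g = f n)
      ↔ toFn red ∘ g = fun x n => (f n x).map Prod.fst := by
  simp only [funext_iff, Function.comp_apply, klComp_proj_apply]
  rw [forall_comm]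
  exact forall₂_congr fun x n =>
    (Equiv.optionCongr (Equiv.prodPUnit M).symm).eq_symm_apply.symm

end Irr

theorem irr_is_countable_power_of_one (M : Type) [Monoid M]
    (lgcd : (ℕ → Option M) → M) (red : (ℕ → Option M) → (ℕ → Option M))
    (h : SatisfiesLgcdRed M lgcd red) :
    ∀ (X : Type) (f : ℕ → X → Option (M × PUnit)),
      ∃! g : X → Option (M × Irr red),
        ∀ n : ℕ,
          KlComp (fun Λ : Irr red => (Λ.1 n).map fun υ => (υ, PUnit.unit)) g
            = f n := by
  intro X f
  simp only [Irr.klComp_proj_eq_iff]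
  exact (Irr.toFn_bijective h).comp_left.existsUnique _
end
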